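/- arXiv:2407.00805 — 3 statements merged into one kernel-verified Lean document; each statement's English description precedes it below -/
import Mathlib

section
/- Let T be a finite type (of trajectories) with a length function ℓ : T → ℕ, and let ≻ be a binary relation on probability mass functions (lotteries) on T. Assume: (POST, second condition) for all t, t' ∈ T with ℓ(t) ≠ ℓ(t'), ¬(δ_t ≻ δ_{t'}), where δ_t is the point-mass lottery at t; and (Negative Dominance) for all lotteries X, Y, if X ≻ Y then there exist t in the support of X and t' in the support of Y with δ_t ≻ δ_{t'}. Then for every pair of different-length lotteries X and Y — i.e., lotteries whose length-supports (the images under ℓ of their supports) are disjoint — both ¬(X ≻ Y) and ¬(Y ≻ X) hold. -/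
/-- POST + Negative Dominance imply no preference between
different-length lotteries: lotteries are PMFs on a finite type `T` of
trajectories with length function `ℓ`. If the agent never prefers a point-mass
lottery on a trajectory to a point-mass lottery on a trajectory of a different
length (POST, second condition), and Negative Dominance holds, then for any
two lotteries whose length-supports are disjoint, neither is preferred to the
other. -/
theorem stmt_4 {T : Type*} [Fintype T] (ℓ : T → ℕ)
    (succ : PMF T → PMF T → Prop)
    (hPOST : ∀ t t' : T, ℓ t ≠ ℓ t' → ¬ succ (PMF.pure t) (PMF.pure t'))
    (hND : ∀ X Y : PMF T, succ X Y →
      ∃ t ∈ X.support, ∃ t' ∈ Y.support, succ (PMF.pure t) (PMF.pure t'))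
    (X Y : PMF T) (hdisj : Disjoint (ℓ '' X.support) (ℓ '' Y.support)) :
    ¬ succ X Y ∧ ¬ succ Y X := by
  have key : ∀ A B : PMF T, Disjoint (ℓ '' A.support) (ℓ '' B.support) →
      ¬ succ A B := by
    intro A B hd hAB
    obtain ⟨t, ht, t', ht', h⟩ := hND A B hAB
    exact hPOST t t'
      (fun he => Set.disjoint_left.mp hd ⟨t, ht, rfl⟩ ⟨t', ht', he.symm⟩) h
  exact ⟨key X Y hdisj, key Y X hdisj.symm⟩
end

section
/- Let T be a finite type (of trajectories) with a length function ℓ : T → ℕ, and let ≻ and ⪰ be binary relations on lotteries (probability mass functions on T). Say the agent weakly prefers X to Y iff X ≻ Y or (X ⪰ Y and Y ⪰ X). Assume: (POSL) for all lotteries X, Y, if X ≻ Y then the length-supports of X and Y are equal; and (ILPACS) for all lotteries X, Y, if X = Σ_{i=1}^{n} p_i X_i with each p_i ∈ (0,1), Σ_i p_i = 1, and for all i ≠ j both ¬(X_i ≻ X_j) and ¬(X_j ≻ X_i), and Y = Σ_{i=1}^{n} q_i Y_i with each q_i ∈ (0,1), Σ_i q_i = 1, X_i ≻ Y_i for some i,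 and the agent weakly prefers X_i to Y_i for every i, then X ≻ Y. Then (Neutrality) for all lotteries X, Y, all n ≥ 2, and all pairwise-distinct lengths l_1, …, l_n: if X = Σ_{i=1}^{n} p_i X_i and Y = Σ_{i=1}^{n} q_i Y_i with each p_i, q_i ∈ (0,1), Σ_i p_i = Σ_i q_i = 1, where for each i the lotteries X_i and Y_i are supported on trajectories of length l_i, and X_i ≻ Y_i for some i while the agent weakly prefers X_i to Y_i for every i, then X ≻ Y. -/
/-- A lottery on the finite type `T` of trajectories: a probability mass
function, represented as a nonnegative real-valued function summing to 1. -/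
def IsLottery {T : Type*} [Fintype T] (X : T → ℝ) : Prop :=
  (∀ t, 0 ≤ X t) ∧ ∑ t, X t = 1

/-- POSL and ILPACS imply Neutrality.  Here `succ` is the strict
preference `≻`, `wge` is `⪰`, and the agent weakly prefers `X` to `Y` iff
`X ≻ Y` or (`X ⪰ Y` and `Y ⪰ X`).  The length-support of a lottery `X` is
`ℓ '' {t | X t ≠ 0}`. -/
theorem stmt_6 {T : Type*} [Fintype T] (ℓ : T → ℕ)
    (succ wge : (T → ℝ) → (T → ℝ) → Prop)
    -- POSL: preferences only between same-length lotteries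
    (hPOSL : ∀ X Y : T → ℝ, IsLottery X → IsLottery Y → succ X Y →
      ℓ '' {t | X t ≠ 0} = ℓ '' {t | Y t ≠ 0})
    -- ILPACS: if lack of preference, against costly shifts
    (hILPACS : ∀ (n : ℕ) (X Y : T → ℝ) (p q : Fin n → ℝ)
        (Xs Ys : Fin n → T → ℝ),
      (∀ i, p i ∈ Set.Ioo (0 : ℝ) 1) → ∑ i, p i = 1 →
      (∀ t, X t = ∑ i, p i * Xs i t) →
      (∀ i j, i ≠ j → ¬ succ (Xs i) (Xs j)) →
      (∀ i, q i ∈ Set.Ioo (0 : ℝ) 1) → ∑ i, q i = 1 →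
      (∀ t, Y t = ∑ i, q i * Ys i t) →
      (∃ i, succ (Xs i) (Ys i)) →
      (∀ i, succ (Xs i) (Ys i) ∨ (wge (Xs i) (Ys i) ∧ wge (Ys i) (Xs i))) →
      succ X Y)
    -- Neutrality antecedent
    (X Y : T → ℝ) (n : ℕ) (hn : 2 ≤ n)
    (l : Fin n → ℕ) (hl : Function.Injective l)
    (p q : Fin n → ℝ) (Xs Ys : Fin n → T → ℝ)
    (hXs : ∀ i, IsLottery (Xs i)) (hYs : ∀ i, IsLottery (Ys i))
    (hp : ∀ i, p i ∈ Set.Ioo (0 : ℝ) 1) (hp1 : ∑ i, p i = 1)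
    (hq : ∀ i, q i ∈ Set.Ioo (0 : ℝ) 1) (hq1 : ∑ i, q i = 1)
    (hX : ∀ t, X t = ∑ i, p i * Xs i t) (hY : ∀ t, Y t = ∑ i, q i * Ys i t)
    (hsuppX : ∀ i t, Xs i t ≠ 0 → ℓ t = l i)
    (hsuppY : ∀ i t, Ys i t ≠ 0 → ℓ t = l i)
    (hex : ∃ i, succ (Xs i) (Ys i))
    (hwk : ∀ i, succ (Xs i) (Ys i) ∨ (wge (Xs i) (Ys i) ∧ wge (Ys i) (Xs i))) :
    succ X Y := by
  have himg : ∀ (Z : T → ℝ) (i : Fin n), IsLottery Z → (∀ t, Z t ≠ 0 → ℓ t = l i) →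
      ℓ '' {t | Z t ≠ 0} = {l i} := by
    intro Z i hZ hs
    have hne : ∃ t, Z t ≠ 0 := by
      by_contra h
      push_neg at h
      have := hZ.2
      simp [h] at this
    obtain ⟨t0, ht0⟩ := hne
    apply Set.eq_singleton_iff_unique_mem.mpr
    constructor
    · exact ⟨t0, ht0, hs t0 ht0⟩
    · rintro x ⟨t, ht, rfl⟩; exact hs t ht
  refine hILPACS n X Y p q Xs Ys hp hp1 hX ?_ hq hq1 hY hex hwk
  intro i j hij hsucc
  have h1 := hPOSL (Xs i) (Xs j) (hXs i) (hXs j) hsucc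
  rw [himg (Xs i) i (hXs i) (hsuppX i), himg (Xs j) j (hXs j) (hsuppX j)] at h1
  exact hij (hl (Set.singleton_eq_singleton_iff.mp h1))
end

section
/- Let ⪰ be a binary relation on a type of options. Define the strict preference X ≻ Y iff X ⪰ Y and ¬(Y ⪰ X); indifference I(X, Y) iff X ⪰ Y and Y ⪰ X; a preferential gap G(X, Y) iff ¬(X ⪰ Y) and ¬(Y ⪰ X); and say the agent lacks a preference between X and Y iff ¬(X ≻ Y) and ¬(Y ≻ X). Assume indifference is transitive: if I(X, Y) and I(Y, Z) then I(X, Z). Suppose there are options s₁, l₁, l₂ such that the agent lacks a preference between s₁ and l₁, lacks a preference between s₁ and l₂, and l₂ ≻ l₁. Then G(s₁, l₁) or G(s₁, l₂); in particular, the agent's preferences are incomplete. -/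
/-- Appendix B: a POST-satisfying agent has incomplete
preferences.  Given a weak preference relation `wge` (`⪰`), define strict
preference, indifference, preferential gaps, and lack of preference as usual.
If indifference is transitive and there are options `s₁, l₁, l₂` with the
agent lacking a preference between `s₁` and each of `l₁, l₂` while strictly
preferring `l₂` to `l₁`, then there is a preferential gap between `s₁` and
`l₁` or between `s₁` and `l₂`; in particular the preferences are incomplete. -/
theorem stmt_8 {α : Type*} (wge : α → α → Prop)
    (strict : α → α → Prop)
    (hstrict : ∀ X Y, strict X Y ↔ wge X Y ∧ ¬ wge Y X)
    (indiff : α → α → Prop)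
    (hindiff : ∀ X Y, indiff X Y ↔ wge X Y ∧ wge Y X)
    (gap : α → α → Prop)
    (hgap : ∀ X Y, gap X Y ↔ ¬ wge X Y ∧ ¬ wge Y X)
    (lacks : α → α → Prop)
    (hlacks : ∀ X Y, lacks X Y ↔ ¬ strict X Y ∧ ¬ strict Y X)
    (htrans : ∀ X Y Z, indiff X Y → indiff Y Z → indiff X Z)
    (s₁ l₁ l₂ : α)
    (h₁ : lacks s₁ l₁) (h₂ : lacks s₁ l₂) (h₃ : strict l₂ l₁) :
    (gap s₁ l₁ ∨ gap s₁ l₂) ∧ ∃ X Y : α, gap X Y := by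
  rw [hlacks, hstrict, hstrict] at h₁ h₂
  rw [hstrict] at h₃
  have key : gap s₁ l₁ ∨ gap s₁ l₂ := by
    by_contra h
    push_neg at h
    rw [hgap] at h
    rw [hgap] at h
    have i1 : indiff s₁ l₁ := (hindiff _ _).mpr (by tauto)
    have i2 : indiff s₁ l₂ := (hindiff _ _).mpr (by tauto)
    have i3 : indiff l₂ l₁ :=
      htrans _ _ _ ((hindiff _ _).mpr ((hindiff _ _).mp i2).symm) i1
    rw [hindiff] at i3
    tauto
  refine ⟨key, ?_⟩
  rcases key with h | h
  exacts [⟨s₁, l₁, h⟩, ⟨s₁, l₂, h⟩]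
end
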